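/- Let σ : G ⇢ L be a regular support, r = rk(L), and let C ⊆ G be a code. For every S ∈ L with ρ(S) = s one has |C_σ(S)| = |C| · |C*_{σ*}(S)| / γ_{σ*}(r − s), where C_σ(S) = G_σ(S) ∩ C and C*_{σ*}(S) = Ĝ_{σ*}(S) ∩ C*. -/

import Mathlib

/-!
Put `H = G_σ(S)`. By (D) the elements `T` with `χ` trivial on `G_σ(T)` are closed under joins, so
`S ≤ σ*(χ)` exactly when `χ` annihilates `H`. Both character counts are therefore annihilator
sizes, `|H^⊥| = [G : H]` and `|C^⊥ ∩ H^⊥| = [G : C + H]`, and the claim becomes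
`|C ∩ H| · [G : H] = |C| · [G : C + H]`, i.e. the second isomorphism theorem
`[C : C ∩ H] = [C + H : H]`.
-/

open Finset
open scoped Classical Pointwise

/-- A finite graded lattice of rank `r` (with rank function `ρ`) that is *regular*:
the counting numbers `μ_≤`, `μ_≥` and the Möbius numbers `μ_L` depend only on ranks. -/
structure RegularLattice (L : Type*) [Lattice L] [BoundedOrder L] [Fintype L] where
  /-- the rank of the lattice -/
  r : ℕ
  /-- the rank function -/
  ρ : L → ℕ
  ρ_bot : ρ ⊥ = 0
  ρ_top : ρ ⊤ = r
  ρ_covby : ∀ S T : L, S ⋖ T → ρ T = ρ S + 1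
  /-- the Möbius function of the lattice -/
  mu : L → L → ℤ
  mu_self : ∀ S : L, mu S S = 1
  mu_sum : ∀ S T : L, S < T → mu S T = - ∑ U : L, (if S ≤ U ∧ U < T then mu S U else 0)
  /-- `μ_≤ s t` : the number of elements of rank `s` below an element of rank `t` -/
  muLE : ℕ → ℕ → ℕ
  card_le : ∀ (s : ℕ) (T : L), Nat.card {S : L // ρ S = s ∧ S ≤ T} = muLE s (ρ T)
  /-- `μ_≥ s t` : the number of elements of rank `s` above an element of rank `t` -/
  muGE : ℕ → ℕ → ℕ
  card_ge : ∀ (s : ℕ) (T : L), Nat.card {S : L // ρ S = s ∧ T ≤ S} = muGE s (ρ T)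
  /-- `μ_L s t` : the common value of the Möbius function on pairs of ranks `s ≤ t`,
  with the convention `μ_L s t = 0` for `s > t` -/
  muN : ℕ → ℕ → ℤ
  mu_eq : ∀ S T : L, S ≤ T → mu S T = muN (ρ S) (ρ T)
  muN_zero : ∀ s t : ℕ, t < s → muN s t = 0

/-- A regular support `σ : G ⇢ L` on a finite abelian group `G` with values in a
regular lattice `L`, together with its cardinality invariant `γ`. -/
structure RegularSupport (L : Type*) [Lattice L] [BoundedOrder L] [Fintype L]
    (G : Type*) [AddCommGroup G] [Fintype G] (RL : RegularLattice L) where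
  /-- the support function -/
  σ : G → L
  supp_zero : ∀ g : G, σ g = ⊥ ↔ g = 0
  supp_neg : ∀ g : G, σ (-g) = σ g
  supp_add : ∀ g₁ g₂ : G, σ (g₁ + g₂) ≤ σ g₁ ⊔ σ g₂
  supp_sup : ∀ S₁ S₂ : L,
    {g : G | σ g ≤ S₁ ⊔ S₂} = {g : G | σ g ≤ S₁} + {g : G | σ g ≤ S₂}
  /-- `γ s` : the common cardinality of `G_σ(S)` over elements `S` of rank `s` -/
  γ : ℕ → ℕ
  card_supp : ∀ S : L, Nat.card {g : G // σ g ≤ S} = γ (RL.ρ S)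

/-- The dual support `σ* : Ĝ → L`, `σ*(χ) = ⋁ {S ∈ L : χ ∈ G_σ(S)*}`. -/
noncomputable def RegularSupport.dualSupp {L : Type*} [Lattice L] [BoundedOrder L] [Fintype L]
    {G : Type*} [AddCommGroup G] [Fintype G] {RL : RegularLattice L}
    (RS : RegularSupport L G RL) (χ : AddChar G ℂˣ) : L :=
  (Finset.univ.filter (fun S : L => ∀ g : G, RS.σ g ≤ S → χ g = 1)).sup id

namespace AddChar

variable {G M : Type*} [AddCommGroup G]

lemma forall_mem_eq_one_iff_le_ker [Monoid M] (χ : AddChar G M) (K : AddSubgroup G) :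
    (∀ g ∈ K, χ g = 1) ↔ K ≤ χ.toAddMonoidHom.ker := by
  simp [SetLike.le_def]

lemma forall_mem_sup_eq_one_iff [Monoid M] (χ : AddChar G M) (H K : AddSubgroup G) :
    (∀ g ∈ H ⊔ K, χ g = 1) ↔ (∀ g ∈ H, χ g = 1) ∧ ∀ g ∈ K, χ g = 1 := by
  simp only [forall_mem_eq_one_iff_le_ker, sup_le_iff]

variable [CommMonoid M]

/-- A character of a group takes unit values. -/
noncomputable def unitsEquiv : AddChar G Mˣ ≃ AddChar G M :=
  toMonoidHomEquiv.trans <|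
    MonoidHom.toHomUnitsMulEquiv.symm.toEquiv.trans toMonoidHomEquiv.symm

noncomputable def annihilatorEquiv (K : AddSubgroup G) :
    {χ : AddChar G M // ∀ g ∈ K, χ g = 1} ≃ AddChar (G ⧸ K) M where
  toFun χ := toAddMonoidHomEquiv.symm <| QuotientAddGroup.lift K χ.1.toAddMonoidHom
    ((forall_mem_eq_one_iff_le_ker χ.1 K).mp χ.2)
  invFun ψ := ⟨ψ.compAddMonoidHom (QuotientAddGroup.mk' K), fun g hg => by
    simp [(QuotientAddGroup.eq_zero_iff g).mpr hg]⟩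
  left_inv χ := by ext; simp
  right_inv ψ := by
    ext g
    induction g using QuotientAddGroup.induction_on
    simp

lemma card_units_eq [Finite G] : Nat.card (AddChar G ℂˣ) = Nat.card G := by
  have := Fintype.ofFinite G
  rw [Nat.card_congr unitsEquiv, Nat.card_eq_fintype_card, card_eq, Nat.card_eq_fintype_card]

lemma card_annihilator [Finite G] (K : AddSubgroup G) :
    Nat.card {χ : AddChar G ℂˣ // ∀ g ∈ K, χ g = 1} = K.index := by
  rw [Nat.card_congr (annihilatorEquiv K), card_units_eq, AddSubgroup.index]

end AddChar

namespace AddSubgroup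

variable {G : Type*} [AddGroup G]

lemma card_inf_mul_index (H K : AddSubgroup G) [H.Normal] :
    Nat.card (H ⊓ K : AddSubgroup G) * H.index = Nat.card K * (K ⊔ H).index := by
  have hcard : Nat.card (H ⊓ K : AddSubgroup G) * (H ⊓ K).relIndex K = Nat.card K := by
    rw [← relIndex_bot_left, ← relIndex_bot_left,
      relIndex_mul_relIndex _ _ _ bot_le inf_le_right]
  calc Nat.card (H ⊓ K : AddSubgroup G) * H.index
      = Nat.card (H ⊓ K : AddSubgroup G) * (H.relIndex (K ⊔ H) * (K ⊔ H).index) := by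
        rw [relIndex_mul_index le_sup_right]
    _ = Nat.card (H ⊓ K : AddSubgroup G) * (H ⊓ K).relIndex K * (K ⊔ H).index := by
        rw [relIndex_sup_right, inf_relIndex_right, mul_assoc]
    _ = Nat.card K * (K ⊔ H).index := by rw [hcard]

end AddSubgroup

namespace RegularSupport

variable {L : Type*} [Lattice L] [BoundedOrder L] [Fintype L]
  {G : Type*} [AddCommGroup G] [Fintype G] {RL : RegularLattice L}
  (RS : RegularSupport L G RL)

/-- `G_σ(S)`, the subgroup of elements supported in `S`. -/
def supportedSubgroup (S : L) : AddSubgroup G where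
  carrier := {g | RS.σ g ≤ S}
  zero_mem' := by simp [(RS.supp_zero 0).mpr rfl]
  add_mem' {a b} ha hb := (RS.supp_add a b).trans (sup_le ha hb)
  neg_mem' {a} ha := by simpa [RS.supp_neg a] using ha

lemma forall_mem_supportedSubgroup_sup_eq_one {M : Type*} [Monoid M] {χ : AddChar G M}
    {S₁ S₂ : L} (h₁ : ∀ g ∈ RS.supportedSubgroup S₁, χ g = 1)
    (h₂ : ∀ g ∈ RS.supportedSubgroup S₂, χ g = 1) :
    ∀ g ∈ RS.supportedSubgroup (S₁ ⊔ S₂), χ g = 1 := by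
  intro g hg
  obtain ⟨a, ha, b, hb, rfl⟩ : g ∈ {g : G | RS.σ g ≤ S₁} + {g : G | RS.σ g ≤ S₂} := by
    rw [← RS.supp_sup]; exact hg
  rw [AddChar.map_add_eq_mul, h₁ a ha, h₂ b hb, one_mul]

lemma forall_mem_supportedSubgroup_dualSupp_eq_one (χ : AddChar G ℂˣ) :
    ∀ g ∈ RS.supportedSubgroup (RS.dualSupp χ), χ g = 1 := by
  refine Finset.sup_induction (p := fun T => ∀ g ∈ RS.supportedSubgroup T, χ g = 1) ?_
    (fun _ h₁ _ h₂ => RS.forall_mem_supportedSubgroup_sup_eq_one h₁ h₂)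
    (fun T hT => (Finset.mem_filter.mp hT).2)
  intro g hg
  simp [(RS.supp_zero g).mp (le_bot_iff.mp hg)]

lemma le_dualSupp_iff (χ : AddChar G ℂˣ) (S : L) :
    S ≤ RS.dualSupp χ ↔ ∀ g ∈ RS.supportedSubgroup S, χ g = 1 :=
  ⟨fun h g hg => RS.forall_mem_supportedSubgroup_dualSupp_eq_one χ g (le_trans hg h),
    fun h => Finset.le_sup (f := id) (Finset.mem_filter.mpr ⟨Finset.mem_univ _, h⟩)⟩

end RegularSupport

/-- For every `S ∈ L` of rank `s = ρ(S)` one has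
`|C_σ(S)| = |C| · |C*_{σ*}(S)| / γ_{σ*}(r − s)`, where `C_σ(S) = G_σ(S) ∩ C`,
`C*_{σ*}(S) = Ĝ_{σ*}(S) ∩ C*` and `γ_{σ*}(r − s) = |Ĝ_{σ*}(S)|`. -/
theorem stmt_12 {L : Type*} [Lattice L] [BoundedOrder L] [Fintype L]
    {G : Type*} [AddCommGroup G] [Fintype G] {RL : RegularLattice L}
    (RS : RegularSupport L G RL) (C : AddSubgroup G) (S : L) :
    (Nat.card {g : G // g ∈ C ∧ RS.σ g ≤ S} : ℚ)
      = (Nat.card C : ℚ)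
          * (Nat.card {χ : AddChar G ℂˣ //
              (∀ g ∈ C, χ g = 1) ∧ S ≤ RS.dualSupp χ} : ℚ)
          / (Nat.card {χ : AddChar G ℂˣ // S ≤ RS.dualSupp χ} : ℚ) := by
  set H := RS.supportedSubgroup S
  have hcode : Nat.card {g : G // g ∈ C ∧ RS.σ g ≤ S} = Nat.card (H ⊓ C : AddSubgroup G) :=
    Nat.card_congr (Equiv.subtypeEquivRight fun _ => and_comm)
  have hdualCode :
      Nat.card {χ : AddChar G ℂˣ // (∀ g ∈ C, χ g = 1) ∧ S ≤ RS.dualSupp χ} = (C ⊔ H).index := by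
    rw [← AddChar.card_annihilator]
    exact Nat.card_congr <| Equiv.subtypeEquivRight fun χ => by
      rw [AddChar.forall_mem_sup_eq_one_iff, RS.le_dualSupp_iff]
  have hdual : Nat.card {χ : AddChar G ℂˣ // S ≤ RS.dualSupp χ} = H.index := by
    rw [← AddChar.card_annihilator]
    exact Nat.card_congr <| Equiv.subtypeEquivRight fun χ => RS.le_dualSupp_iff χ S
  rw [hcode, hdualCode, hdual, eq_div_iff (Nat.cast_ne_zero.mpr H.index_ne_zero_of_finite)]
  exact_mod_cast H.card_inf_mul_index C
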